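/- Suppose f = m·n is a product of two monic polynomials m, n ∈ 𝔽_q[t], and let r ≥ 2. Then, modulo the ideal of 𝔽_q[X_1,…,X_r] generated by m(X_1),…,m(X_r), one has (Π_{i=1}^{r−1} n(X_i))·Π_{j=1}^{r−1} O_m^{(2)}(X_j, X_r) ≡ Π_{j=1}^{r−1} O_f^{(2)}(X_j, X_r); that is, [n(t)^{r−1} ∗ O_m^{(r)}] ≡ O_f^{(r)} Mod m(*). In particular, for f = p^k one has [p^{(r−1)(k−1)} ∗ O_p^{(r)}] ≡ O_{p^k}^{(r)} Mod p(*). -/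

import Mathlib

/-!
Dividing `f(X_a) - f(X_b) = m(X_a) n(X_a) - m(X_b) n(X_b)` by `X_a - X_b` gives the Leibniz rule
`O_{mn}(X_a, X_b) = n(X_a) O_m(X_a, X_b) + m(X_b) O_n(X_a, X_b)`. Modulo `m(X_r)` the second term
vanishes for `b = r`, so each factor `O_f(X_j, X_r)` of the product is `n(X_j) O_m(X_j, X_r)`.
-/

open Finset MvPolynomial

/-- The rank-two Weil operator `O_g^{(2)}(X_a, X_b) = ∑_{j=1}^{deg g} b_j ∑_{α+β=j-1} X_a^α X_b^β`. -/
noncomputable def weilO2 {F : Type*} [Field F] {σ : Type*} (g : Polynomial F) (a b : σ) :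
    MvPolynomial σ F :=
  ∑ j ∈ Finset.range g.natDegree,
    MvPolynomial.C (g.coeff (j + 1)) *
      ∑ pr ∈ Finset.HasAntidiagonal.antidiagonal j, MvPolynomial.X a ^ pr.1 * MvPolynomial.X b ^ pr.2

section WeilOperator

variable {F : Type*} [Field F] {σ : Type*}

theorem X_sub_X_mul_weilO2 (g : Polynomial F) (a b : σ) :
    (X a - X b) * weilO2 g a b
      = Polynomial.aeval (X a : MvPolynomial σ F) g
        - Polynomial.aeval (X b : MvPolynomial σ F) g := by
  rw [weilO2, mul_sum, Polynomial.aeval_eq_sum_range, Polynomial.aeval_eq_sum_range,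
    ← sum_sub_distrib, sum_range_succ']
  simp only [pow_zero, sub_self, add_zero, ← smul_sub]
  refine sum_congr rfl fun j _ => ?_
  have antidiagonal_eq_geom_sum :
      ∑ pr ∈ antidiagonal j, (X a : MvPolynomial σ F) ^ pr.1 * X b ^ pr.2 =
        ∑ i ∈ range (j + 1), (X a : MvPolynomial σ F) ^ i * X b ^ (j + 1 - 1 - i) := by
    rw [Nat.sum_antidiagonal_eq_sum_range_succ_mk]
    simp
  rw [antidiagonal_eq_geom_sum, smul_eq_C_mul, ← geom_sum₂_mul (X a : MvPolynomial σ F) (X b)]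
  ring

theorem weilO2_mul (m n : Polynomial F) {a b : σ} (hab : a ≠ b) :
    weilO2 (m * n) a b
      = Polynomial.aeval (X a : MvPolynomial σ F) n * weilO2 m a b
        + Polynomial.aeval (X b : MvPolynomial σ F) m * weilO2 n a b := by
  have hX : (X a - X b : MvPolynomial σ F) ≠ 0 := sub_ne_zero.mpr fun h => hab (X_injective h)
  apply mul_left_cancel₀ hX
  rw [mul_add, X_sub_X_mul_weilO2, mul_left_comm, X_sub_X_mul_weilO2, mul_left_comm,
    X_sub_X_mul_weilO2]
  simp only [map_mul]
  ring

theorem weilO2_mul_eq_of_mem {I : Ideal (MvPolynomial σ F)} (m n : Polynomial F) {a b : σ}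
    (hab : a ≠ b) (hm : Polynomial.aeval (X b : MvPolynomial σ F) m ∈ I) :
    Ideal.Quotient.mk I (weilO2 (m * n) a b)
      = Ideal.Quotient.mk I (Polynomial.aeval (X a : MvPolynomial σ F) n * weilO2 m a b) := by
  rw [weilO2_mul m n hab, map_add, map_mul _ (Polynomial.aeval _ m),
    Ideal.Quotient.eq_zero_iff_mem.mpr hm, zero_mul, add_zero]

theorem prod_aeval_mul_prod_weilO2_sub_mem {ι : Type*} (t : Finset ι)
    {I : Ideal (MvPolynomial σ F)} (m n : Polynomial F) (v : ι → σ) {b : σ}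
    (hv : ∀ i ∈ t, v i ≠ b)
    (hm : Polynomial.aeval (X b : MvPolynomial σ F) m ∈ I) :
    (∏ i ∈ t, Polynomial.aeval (X (v i) : MvPolynomial σ F) n) * ∏ i ∈ t, weilO2 m (v i) b
      - ∏ i ∈ t, weilO2 (m * n) (v i) b ∈ I := by
  rw [← Ideal.Quotient.eq, ← prod_mul_distrib, map_prod, map_prod]
  exact prod_congr rfl fun i hi => (weilO2_mul_eq_of_mem m n (hv i hi) hm).symm

end WeilOperator

theorem weil_operator_modulus_change_general {F : Type*} [Field F]
    (s : ℕ) :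
    (∀ mm nn : Polynomial F, mm.Monic → nn.Monic →
      ((∏ i : Fin (s + 1),
          Polynomial.aeval (MvPolynomial.X (Fin.castSucc i) : MvPolynomial (Fin (s + 2)) F) nn)
        * ∏ j : Fin (s + 1), weilO2 mm (Fin.castSucc j) (Fin.last (s + 1)))
        - (∏ j : Fin (s + 1), weilO2 (mm * nn) (Fin.castSucc j) (Fin.last (s + 1)))
        ∈ Ideal.span (Set.range fun i : Fin (s + 2) =>
            Polynomial.aeval (MvPolynomial.X i : MvPolynomial (Fin (s + 2)) F) mm))
    ∧ (∀ p : Polynomial F, p.Monic → Irreducible p → ∀ k : ℕ, 1 ≤ k →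
      ((∏ i : Fin (s + 1),
          Polynomial.aeval (MvPolynomial.X (Fin.castSucc i) : MvPolynomial (Fin (s + 2)) F)
            (p ^ (k - 1)))
        * ∏ j : Fin (s + 1), weilO2 p (Fin.castSucc j) (Fin.last (s + 1)))
        - (∏ j : Fin (s + 1), weilO2 (p ^ k) (Fin.castSucc j) (Fin.last (s + 1)))
        ∈ Ideal.span (Set.range fun i : Fin (s + 2) =>
            Polynomial.aeval (MvPolynomial.X i : MvPolynomial (Fin (s + 2)) F) p)) := by
  have modulus_change : ∀ m n : Polynomial F,
      (∏ i : Fin (s + 1), Polynomial.aeval (X i.castSucc : MvPolynomial (Fin (s + 2)) F) n)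
        * ∏ j : Fin (s + 1), weilO2 m j.castSucc (Fin.last (s + 1))
        - ∏ j : Fin (s + 1), weilO2 (m * n) j.castSucc (Fin.last (s + 1))
        ∈ Ideal.span (Set.range fun i : Fin (s + 2) =>
            Polynomial.aeval (X i : MvPolynomial (Fin (s + 2)) F) m) := fun m n =>
    prod_aeval_mul_prod_weilO2_sub_mem univ m n Fin.castSucc
      (fun j _ => (Fin.castSucc_lt_last j).ne) (Ideal.subset_span ⟨Fin.last (s + 1), rfl⟩)
  refine ⟨fun m n _ _ => modulus_change m n, fun p _ _ k hk => ?_⟩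
  rw [← mul_pow_sub_one (by omega : k ≠ 0)]
  exact modulus_change p (p ^ (k - 1))

/-- Suppose `f = m·n` with `m, n` monic and let `r = s + 2 ≥ 2`.  Then, modulo
the ideal generated by `m(X_1),…,m(X_r)`,
`(∏_{i=1}^{r-1} n(X_i))·∏_{j=1}^{r-1} O_m^{(2)}(X_j, X_r) ≡ ∏_{j=1}^{r-1} O_f^{(2)}(X_j, X_r)`,
i.e. `[n(t)^{r-1} ∗ O_m^{(r)}] ≡ O_f^{(r)} Mod m(*)`.  In particular, for `f = p^k` one has
`[p^{(r-1)(k-1)} ∗ O_p^{(r)}] ≡ O_{p^k}^{(r)} Mod p(*)`. -/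
theorem weil_operator_modulus_change {F : Type*} [Field F] [Fintype F]
    (s : ℕ) :
    (∀ mm nn : Polynomial F, mm.Monic → nn.Monic →
      ((∏ i : Fin (s + 1),
          Polynomial.aeval (MvPolynomial.X (Fin.castSucc i) : MvPolynomial (Fin (s + 2)) F) nn)
        * ∏ j : Fin (s + 1), weilO2 mm (Fin.castSucc j) (Fin.last (s + 1)))
        - (∏ j : Fin (s + 1), weilO2 (mm * nn) (Fin.castSucc j) (Fin.last (s + 1)))
        ∈ Ideal.span (Set.range fun i : Fin (s + 2) =>
            Polynomial.aeval (MvPolynomial.X i : MvPolynomial (Fin (s + 2)) F) mm))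
    ∧ (∀ p : Polynomial F, p.Monic → Irreducible p → ∀ k : ℕ, 1 ≤ k →
      ((∏ i : Fin (s + 1),
          Polynomial.aeval (MvPolynomial.X (Fin.castSucc i) : MvPolynomial (Fin (s + 2)) F)
            (p ^ (k - 1)))
        * ∏ j : Fin (s + 1), weilO2 p (Fin.castSucc j) (Fin.last (s + 1)))
        - (∏ j : Fin (s + 1), weilO2 (p ^ k) (Fin.castSucc j) (Fin.last (s + 1)))
        ∈ Ideal.span (Set.range fun i : Fin (s + 2) =>
            Polynomial.aeval (MvPolynomial.X i : MvPolynomial (Fin (s + 2)) F) p)) :=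
  weil_operator_modulus_change_general s
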